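/- Let λ ∈ {1,−1}, L₁ > 0, T > 0, N ≥ 1 and u₀ ∈ ℍ_N. Let (τ_m)_{m≥0} be positive reals and define recursively u_{m+1} = S^N(τ_m)(u_m + iλτ_m|u_m|²u_m). If τ_m‖u_m‖⁶_{L⁶(0,1)} ≤ L₁‖u_m‖² for every m, then ‖u_{m+1}‖² ≤ (1 + L₁τ_m)‖u_m‖² for every m, and for every m with τ₀ + ⋯ + τ_{m−1} ≤ T one has ‖u_m‖² ≤ e^{L₁T}‖u₀‖². -/

import Mathlib

open MeasureTheory Complex Real Set
open scoped ENNReal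

noncomputable section

/-- Lebesgue measure restricted to the interval `(0,1)`. -/
def μ01 : Measure ℝ := volume.restrict (Ioo (0:ℝ) 1)

/-- The `L^p((0,1);ℂ)` norm. -/
def lpnorm (p : ℝ≥0∞) (u : ℝ → ℂ) : ℝ := (eLpNorm u p μ01).toReal

/-- The pointwise cubic nonlinearity `|u|²u`. -/
def cubic (u : ℝ → ℂ) : ℝ → ℂ := fun x => ((‖u x‖ ^ 2 : ℝ) : ℂ) * u x

/-- The Dirichlet sine eigenfunctions `e_k(x) = √2 sin(kπx)`, as elements of `L²((0,1);ℂ)`. -/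
def eFun (k : ℕ) : ℝ → ℂ := fun x => ((Real.sqrt 2 * Real.sin (k * Real.pi * x) : ℝ) : ℂ)

/-- The `k`-th Fourier sine coefficient `∫₀¹ u e_k`. -/
def coeff (k : ℕ) (u : ℝ → ℂ) : ℂ := ∫ x in Ioo (0:ℝ) 1, u x * eFun k x

/-- The spectral Galerkin projection `P^N`. -/
def PN (N : ℕ) (u : ℝ → ℂ) : ℝ → ℂ :=
  fun x => ∑ k ∈ Finset.Icc 1 N, coeff k u * eFun k x

/-- The truncated Schrödinger group `S^N(t) = P^N e^{itΔ}`. -/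
def SN (N : ℕ) (t : ℝ) (u : ℝ → ℂ) : ℝ → ℂ :=
  fun x => ∑ k ∈ Finset.Icc 1 N,
    Complex.exp (-Complex.I * (((k:ℝ)^2 * Real.pi^2 * t : ℝ) : ℂ)) * coeff k u * eFun k x

/-- The space `ℍ_N`: the complex span of `e_1, …, e_N`. -/
def HN (N : ℕ) : Set (ℝ → ℂ) :=
  {u | ∃ c : ℕ → ℂ, u = fun x => ∑ k ∈ Finset.Icc 1 N, c k * eFun k x}

/-- The discrete Dirichlet Laplacian on `ℍ_N`, determined by `Δ_N e_k = −k²π² e_k`. -/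
def DeltaN (N : ℕ) (u : ℝ → ℂ) : ℝ → ℂ :=
  fun x => ∑ k ∈ Finset.Icc 1 N, (-(((k:ℝ)^2 * Real.pi^2 : ℝ) : ℂ)) * coeff k u * eFun k x

/-- The squared `ℍ¹` norm `‖u‖² + ‖u′‖²`. -/
def h1normSq (u : ℝ → ℂ) : ℝ := (lpnorm 2 u)^2 + (lpnorm 2 (deriv u))^2

/-- The Hamiltonian `ℋ(u) = ½‖u′‖² − (λ/4)‖u‖⁴_{L⁴}`. -/
def Ham (l : ℝ) (u : ℝ → ℂ) : ℝ :=
  (1/2) * (lpnorm 2 (deriv u))^2 - (l/4) * (lpnorm 4 u)^4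

/-- The functional `f(u) = ‖u″‖² + λ Re ∫₀¹ u″ conj(|u|²u)`. -/
def fFun (l : ℝ) (u : ℝ → ℂ) : ℝ :=
  (lpnorm 2 (deriv (deriv u)))^2
    + l * (∫ x in Ioo (0:ℝ) 1, deriv (deriv u) x * (starRingEnd ℂ) (cubic u x)).re

/-!
`S^N(τ)` multiplies the sine coefficients by unimodular factors and discards those of index
above `N`, so by Pythagoras and Bessel's inequality for the orthonormal family `e_k` it does not
increase the `L²` norm. The nonlinear substep multiplies `u` pointwise by `1 + iλτ|u|²`, hence its
mass is exactly `‖u‖² + τ²‖u‖⁶_{L⁶}`, which the step-size restriction bounds by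
`(1 + L₁τ)‖u‖²`. Iterating this and using `1 + x ≤ eˣ` gives the bound `e^{L₁T}‖u₀‖²`.
-/

instance : IsFiniteMeasure μ01 := by
  rw [μ01]
  infer_instance

lemma lpnorm_pow_eq_integral {n : ℕ} (hn : n ≠ 0) {f : ℝ → ℂ}
    (hf : AEStronglyMeasurable f μ01) :
    lpnorm n f ^ n = ∫ x, ‖f x‖ ^ n ∂μ01 := by
  have hI : 0 ≤ ∫ x, ‖f x‖ ^ n ∂μ01 := integral_nonneg fun x => by positivity
  rw [lpnorm, toReal_eLpNorm hf, lpNorm_eq_integral_norm_rpow_toReal (by simpa) (by simp) hf]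
  simp only [ENNReal.toReal_natCast, Real.rpow_natCast]
  rw [← Real.rpow_natCast, ← Real.rpow_mul hI, inv_mul_cancel₀ (by exact_mod_cast hn),
    Real.rpow_one]

lemma Orthonormal.norm_sum_smul_sq {𝕜 ι E : Type*} [RCLike 𝕜] [NormedAddCommGroup E]
    [InnerProductSpace 𝕜 E] {v : ι → E} (hv : Orthonormal 𝕜 v) (c : ι → 𝕜) (s : Finset ι) :
    ‖∑ i ∈ s, c i • v i‖ ^ 2 = ∑ i ∈ s, ‖c i‖ ^ 2 := by
  rw [← inner_self_eq_norm_sq (𝕜 := 𝕜), hv.inner_sum, map_sum]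
  refine Finset.sum_congr rfl fun i _ => ?_
  rw [RCLike.conj_mul]
  norm_cast

lemma integral_cos_int_mul_pi {n : ℤ} (hn : n ≠ 0) :
    ∫ x in (0:ℝ)..1, Real.cos (n * π * x) = 0 := by
  have hnπ : (n : ℝ) * π ≠ 0 := mul_ne_zero (Int.cast_ne_zero.2 hn) pi_ne_zero
  rw [intervalIntegral.integral_comp_mul_left (fun x => Real.cos x) hnπ, integral_cos]
  simp [Real.sin_int_mul_pi]

lemma integral_sin_mul_sin {j k : ℕ} (hjk : j + k ≠ 0) :
    ∫ x in (0:ℝ)..1, 2 * (Real.sin (j * π * x) * Real.sin (k * π * x))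
      = if j = k then 1 else 0 := by
  have hprod : ∀ x : ℝ, 2 * (Real.sin (j * π * x) * Real.sin (k * π * x))
      = Real.cos (((j - k : ℤ) : ℝ) * π * x) - Real.cos (((j + k : ℤ) : ℝ) * π * x) := by
    intro x
    push_cast
    rw [sub_mul, add_mul, sub_mul, add_mul, Real.cos_sub, Real.cos_add]
    ring
  simp_rw [hprod]
  rw [intervalIntegral.integral_sub (Continuous.intervalIntegrable (by fun_prop) _ _)
    (Continuous.intervalIntegrable (by fun_prop) _ _),
    integral_cos_int_mul_pi (n := j + k) (by omega), sub_zero]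
  split_ifs with h
  · simp [h]
  · exact integral_cos_int_mul_pi (by omega)

lemma memLp_eFun (k : ℕ) (p : ℝ≥0∞) : MemLp (eFun k) p μ01 := by
  refine MemLp.of_bound (by unfold eFun; fun_prop : Continuous (eFun k)).aestronglyMeasurable
    (Real.sqrt 2) (ae_of_all _ fun x => ?_)
  rw [eFun, Complex.norm_real, norm_mul, Real.norm_of_nonneg (Real.sqrt_nonneg 2)]
  exact mul_le_of_le_one_right (Real.sqrt_nonneg 2) (Real.abs_sin_le_one _)

lemma memLp_of_mem_HN {N : ℕ} {u : ℝ → ℂ} (hu : u ∈ HN N) (p : ℝ≥0∞) : MemLp u p μ01 := by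
  obtain ⟨c, rfl⟩ := hu
  exact memLp_finsetSum _ fun k _ => (memLp_eFun k p).const_mul (c k)

def eFunLp (k : ℕ) : Lp ℂ 2 μ01 := (memLp_eFun k 2).toLp (eFun k)

lemma inner_eFunLp_toLp (k : ℕ) {w : ℝ → ℂ} (hw : MemLp w 2 μ01) :
    inner ℂ (eFunLp k) (hw.toLp w) = coeff k w := by
  rw [L2.inner_def, coeff]
  refine integral_congr_ae ?_
  filter_upwards [(memLp_eFun k 2).coeFn_toLp, hw.coeFn_toLp] with x hk hw
  rw [eFunLp, hk, hw, RCLike.inner_apply, eFun, Complex.conj_ofReal]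

lemma inner_eFunLp_eFunLp {j k : ℕ} (hjk : j + k ≠ 0) :
    inner ℂ (eFunLp j) (eFunLp k) = if j = k then 1 else 0 := by
  rw [show eFunLp k = (memLp_eFun k 2).toLp (eFun k) from rfl, inner_eFunLp_toLp, coeff,
    ← integral_Ioc_eq_integral_Ioo, ← intervalIntegral.integral_of_le zero_le_one]
  have hprod : ∀ x, eFun k x * eFun j x
      = ((2 * (Real.sin (j * π * x) * Real.sin (k * π * x)) : ℝ) : ℂ) := by
    intro x
    rw [eFun, eFun, ← Complex.ofReal_mul, Complex.ofReal_inj]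
    linear_combination (Real.sin (j * π * x) * Real.sin (k * π * x))
      * Real.mul_self_sqrt (zero_le_two : (0:ℝ) ≤ 2)
  simp_rw [hprod]
  rw [intervalIntegral.integral_ofReal, integral_sin_mul_sin hjk]
  split_ifs <;> simp

lemma orthonormal_eFunLp (N : ℕ) : Orthonormal ℂ (fun k : Finset.Icc 1 N => eFunLp k) := by
  rw [orthonormal_iff_ite]
  rintro ⟨j, hj⟩ ⟨k, hk⟩
  rw [Finset.mem_Icc] at hj hk
  simp only [inner_eFunLp_eFunLp (show j + k ≠ 0 by omega), Subtype.mk.injEq]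

lemma coeFn_sum_smul_eFunLp (s : Finset ℕ) (c : ℕ → ℂ) :
    ⇑(∑ k ∈ s, c k • eFunLp k) =ᵐ[μ01] fun x => ∑ k ∈ s, c k * eFun k x := by
  filter_upwards [Lp.coeFn_fun_finsetSum s (fun k => c k • eFunLp k),
    ae_all_iff.2 fun k => Lp.coeFn_smul (c k) (eFunLp k),
    ae_all_iff.2 fun k => (memLp_eFun k 2).coeFn_toLp] with x hsum hsmul heps
  rw [hsum]
  refine Finset.sum_congr rfl fun k _ => ?_
  rw [hsmul k, Pi.smul_apply, eFunLp, heps k, smul_eq_mul]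

lemma lpnorm_two_multiplier_le (N : ℕ) {a : ℕ → ℂ} (ha : ∀ k, ‖a k‖ ≤ 1) {w : ℝ → ℂ}
    (hw : MemLp w 2 μ01) :
    lpnorm 2 (fun x => ∑ k ∈ Finset.Icc 1 N, a k * coeff k w * eFun k x) ≤ lpnorm 2 w := by
  set s := Finset.Icc 1 N
  have hv := orthonormal_eFunLp N
  have hlhs : lpnorm 2 (fun x => ∑ k ∈ s, a k * coeff k w * eFun k x)
      = ‖∑ k : s, (a k * coeff k w) • eFunLp k‖ := by
    rw [Finset.sum_coe_sort s (fun k => (a k * coeff k w) • eFunLp k), Lp.norm_def,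
      lpnorm, eLpNorm_congr_ae (coeFn_sum_smul_eFunLp s _)]
  rw [hlhs, lpnorm, ← Lp.norm_toLp w hw,
    ← pow_le_pow_iff_left₀ (norm_nonneg _) (norm_nonneg _) two_ne_zero]
  calc ‖∑ k : s, (a k * coeff k w) • eFunLp k‖ ^ 2
      = ∑ k : s, ‖a k * coeff k w‖ ^ 2 :=
        hv.norm_sum_smul_sq (fun k : s => a k * coeff k w) Finset.univ
    _ ≤ ∑ k : s, ‖inner ℂ (eFunLp k) (hw.toLp w)‖ ^ 2 := by
        gcongr with k
        rw [inner_eFunLp_toLp, norm_mul]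
        exact mul_le_of_le_one_left (norm_nonneg _) (ha k)
    _ ≤ ‖hw.toLp w‖ ^ 2 := hv.sum_inner_products_le (hw.toLp w)

lemma lpnorm_two_SN_le (N : ℕ) (t : ℝ) {w : ℝ → ℂ} (hw : MemLp w 2 μ01) :
    lpnorm 2 (SN N t w) ≤ lpnorm 2 w := by
  refine lpnorm_two_multiplier_le N (fun k => ?_) hw
  rw [neg_mul, ← mul_neg, ← Complex.ofReal_neg, Complex.norm_exp_I_mul_ofReal]

lemma norm_sq_add_I_mul_cubic (l τ : ℝ) (u : ℝ → ℂ) (x : ℝ) :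
    ‖u x + I * l * τ * cubic u x‖ ^ 2 = ‖u x‖ ^ 2 + (l * τ) ^ 2 * ‖u x‖ ^ 6 := by
  have hfactor : u x + I * l * τ * cubic u x
      = (((1 : ℝ) : ℂ) + ((l * τ * ‖u x‖ ^ 2 : ℝ) : ℂ) * I) * u x := by
    simp only [cubic]
    push_cast
    ring
  rw [hfactor, norm_mul, mul_pow, ← Complex.normSq_eq_norm_sq (_ + _),
    Complex.normSq_add_mul_I 1]
  ring

lemma aestronglyMeasurable_cubic {u : ℝ → ℂ} (hu : AEStronglyMeasurable u μ01) :
    AEStronglyMeasurable (cubic u) μ01 := by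
  unfold cubic
  fun_prop

lemma memLp_two_add_I_mul_cubic (l τ : ℝ) {u : ℝ → ℂ} (hu : MemLp u 6 μ01) :
    MemLp (fun x => u x + I * l * τ * cubic u x) 2 μ01 := by
  have hmeas : AEStronglyMeasurable (fun x => u x + I * l * τ * cubic u x) μ01 :=
    hu.1.add (aestronglyMeasurable_const.mul (aestronglyMeasurable_cubic hu.1))
  refine (memLp_two_iff_integrable_sq_norm hmeas).2 ?_
  simp_rw [norm_sq_add_I_mul_cubic]
  have hu2 : MemLp u (2 : ℕ) μ01 := hu.mono_exponent (by norm_num)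
  exact (hu2.integrable_norm_pow two_ne_zero).add
    (((show MemLp u (6 : ℕ) μ01 from hu).integrable_norm_pow (by norm_num)).const_mul _)

lemma integral_norm_sq_add_I_mul_cubic (l τ : ℝ) {u : ℝ → ℂ} (hu : MemLp u 6 μ01) :
    ∫ x, ‖u x + I * l * τ * cubic u x‖ ^ 2 ∂μ01
      = ∫ x, ‖u x‖ ^ 2 ∂μ01 + (l * τ) ^ 2 * ∫ x, ‖u x‖ ^ 6 ∂μ01 := by
  have hu2 : MemLp u (2 : ℕ) μ01 := hu.mono_exponent (by norm_num)
  simp_rw [norm_sq_add_I_mul_cubic]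
  rw [integral_add (hu2.integrable_norm_pow two_ne_zero), integral_const_mul]
  exact ((show MemLp u (6 : ℕ) μ01 from hu).integrable_norm_pow (by norm_num)).const_mul _

lemma lpnorm_two_sq_add_I_mul_cubic (l τ : ℝ) {u : ℝ → ℂ} (hu : MemLp u 6 μ01) :
    lpnorm 2 (fun x => u x + I * l * τ * cubic u x) ^ 2
      = lpnorm 2 u ^ 2 + (l * τ) ^ 2 * lpnorm 6 u ^ 6 := by
  have h2 := lpnorm_pow_eq_integral two_ne_zero (memLp_two_add_I_mul_cubic l τ hu).1
  have h2' := lpnorm_pow_eq_integral two_ne_zero hu.1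
  have h6 := lpnorm_pow_eq_integral (n := 6) (by norm_num) hu.1
  push_cast at h2 h2' h6
  rw [h2, h2', h6, integral_norm_sq_add_I_mul_cubic l τ hu]

lemma le_exp_sum_mul_of_le_one_add_mul {a g : ℕ → ℝ} (ha : 0 ≤ a 0) (hg : ∀ m, 0 ≤ g m)
    (hstep : ∀ m, a (m + 1) ≤ (1 + g m) * a m) (m : ℕ) :
    a m ≤ Real.exp (∑ j ∈ Finset.range m, g j) * a 0 := by
  induction m with
  | zero => simp
  | succ m ih =>
    calc a (m + 1) ≤ (1 + g m) * a m := hstep m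
      _ ≤ (1 + g m) * (Real.exp (∑ j ∈ Finset.range m, g j) * a 0) := by
        gcongr
        linarith [hg m]
      _ ≤ Real.exp (g m) * (Real.exp (∑ j ∈ Finset.range m, g j) * a 0) := by
        gcongr
        linarith [Real.add_one_le_exp (g m)]
      _ = Real.exp (∑ j ∈ Finset.range (m + 1), g j) * a 0 := by
        rw [Finset.sum_range_succ, Real.exp_add]
        ring

theorem stmt1_general (l : ℝ) (hl : l = 1 ∨ l = -1) (L₁ T : ℝ) (hL₁ : 0 < L₁)
    (N : ℕ) (u₀ : ℝ → ℂ) (hu₀ : u₀ ∈ HN N)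
    (τ : ℕ → ℝ) (hτ : ∀ m, 0 < τ m)
    (u : ℕ → ℝ → ℂ) (hu0 : u 0 = u₀)
    (hrec : ∀ m, u (m+1)
      = SN N (τ m) (fun x => u m x + Complex.I * l * (τ m) * cubic (u m) x))
    (hstep : ∀ m, τ m * (lpnorm 6 (u m))^6 ≤ L₁ * (lpnorm 2 (u m))^2) :
    (∀ m, (lpnorm 2 (u (m+1)))^2 ≤ (1 + L₁ * τ m) * (lpnorm 2 (u m))^2) ∧
    (∀ m, (∑ j ∈ Finset.range m, τ j) ≤ T →
      (lpnorm 2 (u m))^2 ≤ Real.exp (L₁ * T) * (lpnorm 2 u₀)^2) := by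
  have hHN : ∀ m, u m ∈ HN N
    | 0 => hu0 ▸ hu₀
    | m + 1 => hrec m ▸ ⟨_, rfl⟩
  have hl2 : l ^ 2 = 1 := by rcases hl with rfl | rfl <;> norm_num
  have hmass : ∀ m, lpnorm 2 (u (m + 1)) ^ 2 ≤ (1 + L₁ * τ m) * lpnorm 2 (u m) ^ 2 := by
    intro m
    have hu6 := memLp_of_mem_HN (hHN m) 6
    calc lpnorm 2 (u (m + 1)) ^ 2
        ≤ lpnorm 2 (fun x => u m x + I * l * τ m * cubic (u m) x) ^ 2 := by
          rw [hrec m]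
          exact pow_le_pow_left₀ ENNReal.toReal_nonneg
            (lpnorm_two_SN_le N (τ m) (memLp_two_add_I_mul_cubic l (τ m) hu6)) 2
      _ = lpnorm 2 (u m) ^ 2 + τ m * (τ m * lpnorm 6 (u m) ^ 6) := by
          rw [lpnorm_two_sq_add_I_mul_cubic l _ hu6, mul_pow, hl2]
          ring
      _ ≤ (1 + L₁ * τ m) * lpnorm 2 (u m) ^ 2 := by
          nlinarith [mul_le_mul_of_nonneg_left (hstep m) (hτ m).le]
  refine ⟨hmass, fun m hm => ?_⟩
  have hgronwall := le_exp_sum_mul_of_le_one_add_mul (a := fun m => lpnorm 2 (u m) ^ 2)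
    (sq_nonneg _) (fun j => (mul_pos hL₁ (hτ j)).le) hmass m
  rw [← Finset.mul_sum, hu0] at hgronwall
  exact hgronwall.trans (by gcongr)

/-- a.s.-uniform boundedness of the mass of the deterministic part of the
adaptive splitting exponential Euler scheme. -/
theorem stmt1 (l : ℝ) (hl : l = 1 ∨ l = -1) (L₁ T : ℝ) (hL₁ : 0 < L₁) (hT : 0 < T)
    (N : ℕ) (hN : 1 ≤ N) (u₀ : ℝ → ℂ) (hu₀ : u₀ ∈ HN N)
    (τ : ℕ → ℝ) (hτ : ∀ m, 0 < τ m)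
    (u : ℕ → ℝ → ℂ) (hu0 : u 0 = u₀)
    (hrec : ∀ m, u (m+1)
      = SN N (τ m) (fun x => u m x + Complex.I * l * (τ m) * cubic (u m) x))
    (hstep : ∀ m, τ m * (lpnorm 6 (u m))^6 ≤ L₁ * (lpnorm 2 (u m))^2) :
    (∀ m, (lpnorm 2 (u (m+1)))^2 ≤ (1 + L₁ * τ m) * (lpnorm 2 (u m))^2) ∧
    (∀ m, (∑ j ∈ Finset.range m, τ j) ≤ T →
      (lpnorm 2 (u m))^2 ≤ Real.exp (L₁ * T) * (lpnorm 2 u₀)^2) :=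
  stmt1_general l hl L₁ T hL₁ N u₀ hu₀ τ hτ u hu0 hrec hstep
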